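/- arXiv:2312.17252 — 2 statements merged into one kernel-verified Lean document; each statement's English description precedes it below -/
import Mathlib

section
/- The number of Sylow 7-subgroups of PSL(2,8) is 36, and the normalizer of a Sylow 7-subgroup of PSL(2,8) has order 14 and is a dihedral group. -/
/-!
The centre of `SL(2, F)` is trivial in characteristic 2, so `PSL(2, 8) ≅ SL(2, 8)`, a group of
order `504 = 7 · 72`. In `SL(2, F₈)` the matrix `r = diag(x, x⁻¹)`, for `x` a generator of `F₈ˣ`,
has order 7 and is inverted by `s = !![0, 1; 1, 0]`, so `⟨r, s⟩ ≅ D₇` lies in the normaliser `N`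
of the Sylow subgroup `⟨r⟩`. Hence `n₇ = [G : N]` divides `504 / 14 = 36`, is `≡ 1 mod 7`, and is
not `1` because `⟨r⟩` is not normal: so `n₇ = 36`, `|N| = 14` and `N = ⟨r, s⟩ ≅ D₇`.
-/

open Subgroup
open scoped MatrixGroups

section

variable {G : Type*} [Group G] {a b : G}

theorem conj_eq_inv_of_mem_zpowers (hab : b * a * b⁻¹ = a⁻¹) {x : G} (hx : x ∈ zpowers a) :
    b * x * b⁻¹ = x⁻¹ := by
  obtain ⟨k, rfl⟩ := mem_zpowers_iff.mp hx
  simpa [hab] using map_zpow (MulAut.conj b) a k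

theorem mem_normalizer_zpowers_of_conj_eq_inv (hb : b * b = 1) (hab : b * a * b⁻¹ = a⁻¹) :
    b ∈ normalizer (zpowers a : Set G) := by
  have hconj {x : G} (hx : x ∈ zpowers a) : b * x * b⁻¹ ∈ zpowers a := by
    rw [conj_eq_inv_of_mem_zpowers hab hx]
    exact inv_mem hx
  refine mem_normalizer_iff.mpr fun x => ⟨hconj, fun hx => ?_⟩
  convert hconj hx using 1
  rw [inv_eq_of_mul_eq_one_right hb, ← mul_assoc, ← mul_assoc, hb, one_mul, mul_assoc, hb, mul_one]

theorem not_normal_zpowers_of_not_commute {g : G} (h : ¬Commute a (g * a * g⁻¹)) :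
    ¬(zpowers a).Normal := fun hnormal => by
  obtain ⟨k, hk⟩ := mem_zpowers_iff.mp (hnormal.conj_mem a (mem_zpowers a) g)
  exact h (hk ▸ Commute.zpow_right (Commute.refl a) k)

end

namespace DihedralGroup

variable {G : Type*} [Group G] {n : ℕ} {a b : G}

def rotationHom (a : G) (ha : a ^ n = 1) : Multiplicative (ZMod n) →* G :=
  AddMonoidHom.toMultiplicativeLeft <| ZMod.lift n
    ⟨zmultiplesHom (Additive G) (Additive.ofMul a), by simp [← ofMul_pow, ha]⟩

theorem rotationHom_intCast (ha : a ^ n = 1) (k : ℤ) :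
    rotationHom a ha (.ofAdd (k : ZMod n)) = a ^ k := by
  simp [rotationHom]

theorem rotationHom_mem_zpowers (ha : a ^ n = 1) (i : ZMod n) :
    rotationHom a ha (.ofAdd i) ∈ zpowers a := by
  obtain ⟨k, rfl⟩ := ZMod.intCast_surjective i
  rw [rotationHom_intCast]
  exact zpow_mem_zpowers a k

theorem rotationHom_injective (ha : a ^ n = 1) (hn : orderOf a = n) :
    Function.Injective (rotationHom a ha) := by
  refine (injective_iff_map_eq_one _).mpr fun i hi => ?_
  obtain ⟨k, rfl⟩ : ∃ k : ℤ, Multiplicative.ofAdd (k : ZMod n) = i :=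
    (ZMod.intCast_surjective i.toAdd).imp fun _ => congrArg Multiplicative.ofAdd
  rw [rotationHom_intCast, ← orderOf_dvd_iff_zpow_eq_one, hn] at hi
  rw [(ZMod.intCast_zmod_eq_zero_iff_dvd k n).mpr hi]
  rfl

theorem rotationHom_mul_eq_mul_rotationHom (ha : a ^ n = 1) (hab : b * a * b⁻¹ = a⁻¹)
    (hb : b * b = 1) (i : ZMod n) :
    rotationHom a ha (.ofAdd i) * b = b * rotationHom a ha (.ofAdd (-i)) := by
  rw [ofAdd_neg, map_inv, ← conj_eq_inv_of_mem_zpowers hab (rotationHom_mem_zpowers ha _),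
    inv_eq_of_mul_eq_one_right hb, ← mul_assoc, ← mul_assoc, hb, one_mul]

def lift (a b : G) (ha : a ^ n = 1) (hb : b * b = 1) (hab : b * a * b⁻¹ = a⁻¹) :
    DihedralGroup n →* G where
  toFun
    | r i => rotationHom a ha (.ofAdd i)
    | sr i => b * rotationHom a ha (.ofAdd i)
  map_one' := map_one (rotationHom a ha)
  map_mul' := by
    have hrb := rotationHom_mul_eq_mul_rotationHom ha hab hb
    rintro (i | i) (j | j)
    · exact map_mul (rotationHom a ha) (.ofAdd i) (.ofAdd j)
    · show b * rotationHom a ha (.ofAdd (j - i)) = _ * (b * _)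
      rw [← mul_assoc, hrb, mul_assoc, ← map_mul, sub_eq_neg_add]; rfl
    · show b * rotationHom a ha (.ofAdd (i + j)) = b * _ * _
      rw [mul_assoc, ← map_mul]; rfl
    · show rotationHom a ha (.ofAdd (j - i)) = b * _ * (b * _)
      rw [mul_assoc, ← mul_assoc _ b, hrb, ← mul_assoc, ← mul_assoc, hb, one_mul, ← map_mul,
        sub_eq_neg_add]
      rfl

variable {ha : a ^ n = 1} {hb : b * b = 1} {hab : b * a * b⁻¹ = a⁻¹}

theorem lift_injective (hn : orderOf a = n) (hb_not_mem : b ∉ zpowers a) :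
    Function.Injective (lift a b ha hb hab) := by
  refine (injective_iff_map_eq_one _).mpr ?_
  rintro (i | i) h
  · exact congrArg r (rotationHom_injective ha hn (h.trans (map_one _).symm))
  · exact absurd (eq_inv_of_mul_eq_one_left h ▸ inv_mem (rotationHom_mem_zpowers ha _)) hb_not_mem

theorem range_lift_le_normalizer : (lift a b ha hb hab).range ≤ normalizer (zpowers a : Set G) := by
  rintro _ ⟨i | i, rfl⟩
  · exact le_normalizer (rotationHom_mem_zpowers ha _)
  · exact mul_mem (mem_normalizer_zpowers_of_conj_eq_inv hb hab)
      (le_normalizer (rotationHom_mem_zpowers ha _))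

end DihedralGroup

theorem Subgroup.nonempty_mulEquiv_of_injective {G H : Type*} [Group G] [Group H] {K : Subgroup G}
    [Finite K] {f : H →* G} (hf : Function.Injective f) (hle : f.range ≤ K)
    (hcard : Nat.card K ≤ Nat.card H) : Nonempty (K ≃* H) := by
  have hK : f.range = K :=
    eq_of_le_of_card_ge hle (hcard.trans (Nat.card_congr (MonoidHom.ofInjective hf).toEquiv).le)
  exact ⟨(MulEquiv.subgroupCongr hK.symm).trans (MonoidHom.ofInjective hf).symm⟩

theorem Sylow.nonempty_normalizer_mulEquiv {G : Type*} [Group G] {p : ℕ} [Fact p.Prime]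
    [Finite (Sylow p G)] (P Q : Sylow p G) :
    Nonempty (normalizer (Q : Set G) ≃* normalizer (P : Set G)) := by
  obtain ⟨g, rfl⟩ := MulAction.exists_smul_eq G P Q
  have hQ : normalizer ((g • P : Sylow p G) : Set G) =
      (normalizer (P : Set G)).map (MulAut.conj g).toMonoidHom := by
    change normalizer (((g • P : Sylow p G) : Subgroup G) : Set G) =
      map _ (normalizer ((P : Subgroup G) : Set G))
    rw [map_equiv_normalizer_eq, Sylow.coe_subgroup_smul]
    rfl
  rw [hQ]
  exact ⟨(equivMapOfInjective _ _ (MulAut.conj g).injective).symm⟩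

instance fact_prime_seven : Fact (Nat.Prime 7) := ⟨by norm_num⟩

section SylowSeven

variable {G : Type*} [Group G] [Finite G]

theorem Sylow.index_normalizer_eq_36 (hG : Nat.card G = 504) (P : Sylow 7 G)
    (h14 : 14 ∣ Nat.card (normalizer (P : Set G))) (hP : ¬(P : Subgroup G).Normal) :
    (normalizer (P : Set G)).index = 36 := by
  set N := normalizer (P : Set G)
  have hmod : N.index % 7 = 1 := by
    simpa [Nat.ModEq, P.card_eq_index_normalizer] using card_sylow_modEq_one 7 G
  have hne : N.index ≠ 1 := fun h => hP (normalizer_eq_top_iff.mp (index_eq_one.mp h))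
  obtain ⟨m, hm⟩ := h14
  have hdvd : N.index ∣ 36 := by
    have := card_mul_index N
    rw [hm, hG] at this
    exact ⟨m, by linarith⟩
  have hle : N.index ≤ 36 := Nat.le_of_dvd (by norm_num) hdvd
  interval_cases h : N.index <;> omega

theorem card_sylow_seven_eq_36_and_normalizer_dihedral (hG : Nat.card G = 504) {a b : G}
    (ha : orderOf a = 7) (hb : orderOf b = 2) (hab : b * a * b⁻¹ = a⁻¹)
    (hnormal : ¬(zpowers a).Normal) :
    Nat.card (Sylow 7 G) = 36 ∧ ∀ P : Sylow 7 G,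
      Nat.card (normalizer (P : Set G)) = 14 ∧
        Nonempty (normalizer (P : Set G) ≃* DihedralGroup 7) := by
  have hindex : ¬7 ∣ (zpowers a).index := by
    have := card_mul_index (zpowers a)
    rw [Nat.card_zpowers, ha, hG] at this
    omega
  have hP₀ : IsPGroup 7 (zpowers a) := .of_card (n := 1) (by rw [Nat.card_zpowers, ha, pow_one])
  let P₀ : Sylow 7 G := hP₀.toSylow hindex
  have hb2 : b * b = 1 := by rw [← sq, ← hb, pow_orderOf_eq_one]
  let f := DihedralGroup.lift a b (ha ▸ pow_orderOf_eq_one a) hb2 hab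
  have hf : Function.Injective f := DihedralGroup.lift_injective ha fun hmem => by
    have := orderOf_dvd_of_mem_zpowers hmem
    rw [ha, hb] at this
    norm_num at this
  have hcard_range : Nat.card f.range = 14 := by
    rw [← Nat.card_congr (MonoidHom.ofInjective hf).toEquiv, DihedralGroup.nat_card]
  have hn₇ : Nat.card (Sylow 7 G) = 36 := by
    rw [P₀.card_eq_index_normalizer]
    exact P₀.index_normalizer_eq_36 hG
      (hcard_range ▸ card_dvd_of_le DihedralGroup.range_lift_le_normalizer) hnormal
  have hcard_normalizer (P : Sylow 7 G) : Nat.card (normalizer (P : Set G)) = 14 := by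
    have := card_mul_index (normalizer (P : Set G))
    rw [← P.card_eq_index_normalizer, hn₇, hG] at this
    omega
  refine ⟨hn₇, fun P => ⟨hcard_normalizer P, ?_⟩⟩
  obtain ⟨e⟩ := P₀.nonempty_normalizer_mulEquiv P
  obtain ⟨e₀⟩ := nonempty_mulEquiv_of_injective (K := normalizer (P₀ : Set G)) hf
    DihedralGroup.range_lift_le_normalizer (by rw [hcard_normalizer, DihedralGroup.nat_card])
  exact ⟨e.trans e₀⟩

end SylowSeven

namespace Matrix

theorem card_specialLinearGroup_mul_card_units {ι R : Type*} [Fintype ι] [DecidableEq ι]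
    [Nonempty ι] [CommRing R] :
    Nat.card (SpecialLinearGroup ι R) * Nat.card Rˣ = Nat.card (GL ι R) := by
  let det : GL ι R →* Rˣ := GeneralLinearGroup.det
  have hker : Nat.card det.ker = Nat.card (SpecialLinearGroup ι R) := by
    refine Nat.card_congr
      { toFun := fun A => ⟨A.1, by simpa [det] using congrArg Units.val (MonoidHom.mem_ker.mp A.2)⟩
        invFun := fun A => ⟨A, by simp [det]⟩
        left_inv := fun A => by ext; rfl
        right_inv := fun A => by ext; rfl }
  rw [← hker, ← card_mul_index det.ker, index_ker, MonoidHom.range_eq_top.mpr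
    GeneralLinearGroup.det_surjective, card_top]

variable {n : Type*} [Fintype n] [DecidableEq n]

def SpecialLinearGroup.mapEquiv {R S : Type*} [CommRing R] [CommRing S] (e : R ≃+* S) :
    SpecialLinearGroup n R ≃* SpecialLinearGroup n S :=
  MonoidHom.toMulEquiv (map e.toRingHom) (map e.symm.toRingHom) (by ext; simp) (by ext; simp)

theorem SpecialLinearGroup.center_eq_bot_of_card_eq_char_pow {R : Type*} [CommRing R]
    [IsReduced R] {p k : ℕ} [ExpChar R p] (hn : Fintype.card n = p ^ k) :
    center (SpecialLinearGroup n R) = ⊥ := by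
  refine eq_bot_iff.mpr fun A hA => ?_
  obtain ⟨r, hr, hA⟩ := SpecialLinearGroup.mem_center_iff.mp hA
  have hr1 : r - 1 = 0 :=
    IsNilpotent.eq_zero ⟨p ^ k, by rw [sub_pow_expChar_pow, ← hn, hr, one_pow, sub_self]⟩
  refine mem_bot.mpr (Subtype.ext ?_)
  rw [← hA, sub_eq_zero.mp hr1]
  simp

def ProjectiveSpecialLinearGroup.mulEquivOfCenterEqBot {R : Type*} [CommRing R]
    (h : center (SpecialLinearGroup n R) = ⊥) :
    ProjectiveSpecialLinearGroup n R ≃* SpecialLinearGroup n R :=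
  (QuotientGroup.quotientMulEquivOfEq h).trans QuotientGroup.quotientBot

end Matrix

/-- `(a, b, c)` stands for `a + b x + c x²` in `𝔽₂[x] / (x³ + x + 1)`; inversion is `a ↦ a⁶`,
as `𝔽₈ˣ` has order 7. -/
def F8 : Type := ZMod 2 × ZMod 2 × ZMod 2

namespace F8

instance : DecidableEq F8 := inferInstanceAs (DecidableEq (ZMod 2 × ZMod 2 × ZMod 2))
instance : Fintype F8 := inferInstanceAs (Fintype (ZMod 2 × ZMod 2 × ZMod 2))

instance : Zero F8 := ⟨(0, 0, 0)⟩
instance : One F8 := ⟨(1, 0, 0)⟩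
instance : Add F8 := ⟨fun a b => (a.1 + b.1, a.2.1 + b.2.1, a.2.2 + b.2.2)⟩
instance : Mul F8 := ⟨fun a b =>
  (a.1 * b.1 + a.2.1 * b.2.2 + a.2.2 * b.2.1,
   a.1 * b.2.1 + a.2.1 * b.1 + a.2.1 * b.2.2 + a.2.2 * b.2.1 + a.2.2 * b.2.2,
   a.1 * b.2.2 + a.2.1 * b.2.1 + a.2.2 * b.1 + a.2.2 * b.2.2)⟩
instance : Neg F8 := ⟨id⟩
instance : Inv F8 := ⟨fun a => a * a * (a * a * (a * a))⟩

instance : CommRing F8 where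
  add_assoc := by decide
  zero_add := by decide
  add_zero := by decide
  add_comm := by decide
  mul_assoc := by decide
  one_mul := by decide
  mul_one := by decide
  left_distrib := by decide
  right_distrib := by decide
  zero_mul := by decide
  mul_zero := by decide
  mul_comm := by decide
  neg_add_cancel := by decide
  nsmul := nsmulRec
  zsmul := zsmulRec

instance : Field F8 where
  exists_pair_ne := ⟨0, 1, by decide⟩
  mul_inv_cancel := by decide
  inv_zero := by decide
  nnqsmul := _
  qsmul := _

theorem card : Fintype.card F8 = 8 := rfl

def x : F8 := (0, 1, 0)

def rotation : SL(2, F8) := ⟨!![x, 0; 0, x⁻¹], by decide⟩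
def reflection : SL(2, F8) := ⟨!![0, 1; 1, 0], by decide⟩
def transvection : SL(2, F8) := ⟨!![1, 1; 0, 1], by decide⟩

theorem card_specialLinearGroup : Nat.card SL(2, F8) = 504 := by
  have h := Matrix.card_specialLinearGroup_mul_card_units (ι := Fin 2) (R := F8)
  rw [Matrix.card_GL_field, Nat.card_units, Nat.card_eq_fintype_card (α := F8), card] at h
  simp [Fin.prod_univ_two] at h ⊢
  omega

theorem orderOf_rotation : orderOf rotation = 7 := orderOf_eq_prime (by decide) (by decide)

theorem orderOf_reflection : orderOf reflection = 2 := orderOf_eq_prime (by decide) (by decide)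

theorem reflection_mul_rotation_mul_inv : reflection * rotation * reflection⁻¹ = rotation⁻¹ := by
  decide

theorem not_commute_rotation : ¬Commute rotation (transvection * rotation * transvection⁻¹) :=
  fun h => absurd h.eq (by decide)

noncomputable def projectiveSpecialLinearGroupEquiv :
    Matrix.ProjectiveSpecialLinearGroup (Fin 2) (GaloisField 2 3) ≃* SL(2, F8) :=
  letI := Fintype.ofFinite (GaloisField 2 3)
  (Matrix.ProjectiveSpecialLinearGroup.mulEquivOfCenterEqBot
      (Matrix.SpecialLinearGroup.center_eq_bot_of_card_eq_char_pow (p := 2) (k := 1) rfl)).trans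
    (Matrix.SpecialLinearGroup.mapEquiv (FiniteField.ringEquivOfCardEq (by
      rw [← Nat.card_eq_fintype_card, GaloisField.card 2 3 (by norm_num)]; rfl)))

end F8

theorem sylow_seven_psl_2_8 :
    Nat.card (Sylow 7 (Matrix.ProjectiveSpecialLinearGroup (Fin 2) (GaloisField 2 3))) = 36 ∧
    ∀ P : Sylow 7 (Matrix.ProjectiveSpecialLinearGroup (Fin 2) (GaloisField 2 3)),
      Nat.card
        (Subgroup.normalizer ((P : Subgroup (Matrix.ProjectiveSpecialLinearGroup (Fin 2) (GaloisField 2 3))) : Set (Matrix.ProjectiveSpecialLinearGroup (Fin 2) (GaloisField 2 3)))) = 14 ∧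
      Nonempty
        ((Subgroup.normalizer ((P : Subgroup (Matrix.ProjectiveSpecialLinearGroup (Fin 2) (GaloisField 2 3))) : Set (Matrix.ProjectiveSpecialLinearGroup (Fin 2) (GaloisField 2 3))))
          ≃* DihedralGroup 7) := by
  let e := F8.projectiveSpecialLinearGroupEquiv
  refine card_sylow_seven_eq_36_and_normalizer_dihedral (a := e.symm F8.rotation)
    (b := e.symm F8.reflection) ?_ ?_ ?_ ?_ ?_
  · rw [Nat.card_congr e.toEquiv, F8.card_specialLinearGroup]
  · rw [MulEquiv.orderOf_eq, F8.orderOf_rotation]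
  · rw [MulEquiv.orderOf_eq, F8.orderOf_reflection]
  · simpa using congrArg e.symm F8.reflection_mul_rotation_mul_inv
  · refine not_normal_zpowers_of_not_commute (g := e.symm F8.transvection) fun h => ?_
    exact F8.not_commute_rotation (by simpa using h.map e)
end

section
/- Let G be a group generated by a subgroup H of order 56 isomorphic to 2^3:7 (elementary abelian of order 8 extended by a fixed-point-freely acting element of order 7) together with an involution t inverting the order-7 element. If G is isomorphic to PSL(2,8), then there exists an involution m in the elementary abelian subgroup 2^3 of H such that mt has order 3. -/
/-!
Here `|G| = |PSL(2,8)| = 504`, so `H = ⟨g⟩E` has index dividing `9`, and every involution of `H`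
lies in `E`. Since `E \ {1}` is one `⟨g⟩`-orbit and `t` normalises `⟨g⟩`, a nontrivial element
of `E ∩ tEt⁻¹` would make `t` normalise `E`; then `E` is normal in `G = ⟨E, g, t⟩` with
quotient of odd order `63`, forcing `t ∈ E`. Hence `E ∩ tEt⁻¹ = 1`, which makes the cosets
`H` and `utH` (`u ∈ E`) pairwise distinct, so they are all of `G ⧸ H`. The involution `t` fixes
one of these nine cosets, necessarily some `utH`; then `(ut)⁻¹t(ut)` is an involution of `H`,
so it lies in `E`, and `(ut)³ = u · (ut)⁻¹t(ut)` lies in `E ∩ tEt⁻¹`, hence is trivial.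
-/

open Subgroup

section SpecialLinearGroup

open Matrix

theorem Matrix.card_specialLinearGroup_mul_card_units_s10 {n R : Type*} [Fintype n] [DecidableEq n]
    [Nonempty n] [CommRing R] :
    Nat.card (SpecialLinearGroup n R) * Nat.card Rˣ = Nat.card (GL n R) := by
  let e : SpecialLinearGroup n R ≃ (GeneralLinearGroup.det : GL n R →* Rˣ).ker :=
    { toFun A := ⟨A, SpecialLinearGroup.coeToGL_det A⟩
      invFun B := ⟨B.1, by simpa using congrArg Units.val (MonoidHom.mem_ker.mp B.2)⟩
      left_inv _ := rfl
      right_inv _ := Subtype.ext (Units.ext rfl) }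
  have hrange : (GeneralLinearGroup.det : GL n R →* Rˣ).range = ⊤ :=
    MonoidHom.range_eq_top.mpr GeneralLinearGroup.det_surjective
  rw [Nat.card_congr e, ← card_mul_index (GeneralLinearGroup.det : GL n R →* Rˣ).ker, index_ker,
    hrange, card_top]

theorem Matrix.SpecialLinearGroup.center_fin_two_eq_bot {R : Type*} [CommRing R] [CharP R 2]
    [NoZeroDivisors R] : center (SpecialLinearGroup (Fin 2) R) = ⊥ := by
  refine eq_bot_iff.mpr fun A hA => ?_
  obtain ⟨r, hr, hrA⟩ := SpecialLinearGroup.mem_center_iff.mp hA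
  have hr1 : r = 1 := CharTwo.sq_injective (by simpa using hr)
  rw [mem_bot, SpecialLinearGroup.ext_iff]
  simp [← hrA, hr1]

theorem card_PSL_two_galoisField_two_three :
    Nat.card (ProjectiveSpecialLinearGroup (Fin 2) (GaloisField 2 3)) = 504 := by
  let F := GaloisField 2 3
  have : Fintype F := Fintype.ofFinite F
  have hq : Fintype.card F = 8 := by
    rw [← Nat.card_eq_fintype_card, GaloisField.card 2 3 three_ne_zero]; rfl
  have hSL := card_specialLinearGroup_mul_card_units_s10 (n := Fin 2) (R := F)
  rw [card_GL_field, Nat.card_units, Nat.card_eq_fintype_card (α := F), hq] at hSL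
  norm_num [Fin.prod_univ_two] at hSL
  show (center (SpecialLinearGroup (Fin 2) F)).index = 504
  rw [SpecialLinearGroup.center_fin_two_eq_bot, index_bot]
  omega

end SpecialLinearGroup

section
variable {G : Type*} [Group G]

theorem Commute.of_pow_left_of_coprime {g s : G} {d : ℕ} (hd : d.Coprime (orderOf g))
    (h : Commute (g ^ d) s) : Commute g s := by
  obtain ⟨m, hm⟩ := mem_zpowers_iff.mp (mem_zpowers_pow_iff.mpr hd)
  simpa [hm] using h.zpow_left m

theorem injOn_conj_pow {g s : G} (hp : (orderOf g).Prime) (hgs : ¬Commute g s) :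
    (Set.Iio (orderOf g)).InjOn fun k => g ^ k * s * (g ^ k)⁻¹ := by
  suffices key : ∀ a b, a ≤ b → b < orderOf g →
      g ^ a * s * (g ^ a)⁻¹ = g ^ b * s * (g ^ b)⁻¹ → a = b by
    intro a ha b hb hab
    rcases le_total a b with h | h
    · exact key a b h hb hab
    · exact (key b a h ha hab.symm).symm
  intro a b hab hb h
  obtain ⟨d, rfl⟩ := Nat.exists_eq_add_of_le hab
  by_contra hne
  have hcop : d.Coprime (orderOf g) :=
    Nat.coprime_comm.mp <| hp.coprime_iff_not_dvd.mpr <|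
      Nat.not_dvd_of_pos_of_lt (by omega) (by omega)
  refine hgs (Commute.of_pow_left_of_coprime hcop ?_)
  have hconj : MulAut.conj (g ^ a) s = MulAut.conj (g ^ a) (MulAut.conj (g ^ d) s) := by
    simpa only [MulAut.conj_apply, pow_add, mul_inv_rev, mul_assoc] using h
  exact (mul_inv_eq_iff_eq_mul.mp ((MulAut.conj (g ^ a)).injective hconj).symm)

theorem exists_conj_pow_eq_of_card_eq {E : Subgroup G} {g s x : G} (hp : (orderOf g).Prime)
    (hg : g ∈ normalizer E) (hfpf : ∀ y ∈ E, g * y * g⁻¹ = y → y = 1)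
    (hcard : Nat.card E = orderOf g + 1) (hs : s ∈ E) (hs1 : s ≠ 1) (hx : x ∈ E) (hx1 : x ≠ 1) :
    ∃ k, g ^ k * s * (g ^ k)⁻¹ = x := by
  have : Finite E := Nat.finite_of_card_ne_zero (by omega)
  have hgs : ¬Commute g s := fun h => hs1 (hfpf s hs (by rw [h.eq, mul_inv_cancel_right]))
  have hsub : (fun k => g ^ k * s * (g ^ k)⁻¹) '' Set.Iio (orderOf g) ⊆ (E : Set G) \ {1} := by
    rintro _ ⟨k, -, rfl⟩
    exact ⟨(mem_normalizer_iff.mp (pow_mem hg k) s).mp hs, by simpa using hs1⟩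
  have hle : ((E : Set G) \ {1}).ncard ≤
      ((fun k => g ^ k * s * (g ^ k)⁻¹) '' Set.Iio (orderOf g)).ncard := by
    rw [(injOn_conj_pow hp hgs).ncard_image, Set.ncard_Iio_nat,
      Set.ncard_sdiff_singleton_of_mem (one_mem E), ← Nat.card_coe_set_eq, SetLike.coe_sort_coe,
      hcard, Nat.add_sub_cancel]
  have hxE : x ∈ (E : Set G) \ {1} := ⟨hx, hx1⟩
  rw [← Set.eq_of_subset_of_ncard_le hsub hle (Set.toFinite _)] at hxE
  obtain ⟨k, -, hk⟩ := hxE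
  exact ⟨k, hk⟩

theorem mem_normalizer_of_conj_mem {E : Subgroup G} {g s t : G} (hp : (orderOf g).Prime)
    (hg : g ∈ normalizer E) (hfpf : ∀ y ∈ E, g * y * g⁻¹ = y → y = 1)
    (hcard : Nat.card E = orderOf g + 1) (htg : t * g * t⁻¹ ∈ normalizer E) (hs : s ∈ E)
    (hs1 : s ≠ 1) (hts : t * s * t⁻¹ ∈ E) : t ∈ normalizer E := by
  have : Finite E := Nat.finite_of_card_ne_zero (by omega)
  refine mem_normalizer_fintype fun x hx => ?_
  by_cases hx1 : x = 1
  · simp [hx1]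
  obtain ⟨k, rfl⟩ := exists_conj_pow_eq_of_card_eq hp hg hfpf hcard hs hs1 hx hx1
  have hconj : t * (g ^ k * s * (g ^ k)⁻¹) * t⁻¹ =
      (t * g * t⁻¹) ^ k * (t * s * t⁻¹) * ((t * g * t⁻¹) ^ k)⁻¹ := by
    rw [conj_pow]
    group
  rw [hconj]
  exact (mem_normalizer_iff.mp (pow_mem htg k) _).mp hts

theorem Subgroup.mem_of_mul_self_mem_of_odd_index {N : Subgroup G} [N.Normal] (hN : Odd N.index)
    {x : G} (hx : x * x ∈ N) : x ∈ N := by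
  obtain ⟨k, hk⟩ := hN
  have hpow := N.pow_index_mem x
  rw [hk, pow_succ, pow_mul, sq] at hpow
  exact (N.mul_mem_cancel_left (pow_mem hx k)).mp hpow

theorem mem_of_mul_self_eq_one_of_mem_sup {E K : Subgroup G} (hK : K ≤ normalizer E)
    (hdisj : Disjoint E K) (hodd : Odd (Nat.card K)) {x : G} (hx : x ∈ K ⊔ E) (hx2 : x * x = 1) :
    x ∈ E := by
  rw [← SetLike.mem_coe, coe_mul_of_left_le_normalizer_right K E hK] at hx
  obtain ⟨y, hy, e, he, rfl⟩ := hx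
  beta_reduce at hx2
  have hyE : y * y ∈ E := by
    have hconj : y⁻¹ * e * y ∈ E := (mem_normalizer_iff''.mp (hK hy) e).mp he
    rw [eq_inv_of_mul_eq_one_left (a := y * y) (b := y⁻¹ * e * y * e) (by rw [← hx2]; group)]
    exact inv_mem (mul_mem hconj he)
  have hy2 : y * y = 1 := disjoint_def.mp hdisj hyE (mul_mem hy hy)
  have hy1 : y = 1 := by
    have h2 : orderOf y ∣ 2 := orderOf_dvd_of_pow_eq_one ((sq y).trans hy2)
    exact orderOf_eq_one_iff.mp <|
      (hodd.coprime_two_left.coprime_dvd_left h2).eq_one_of_dvd (K.orderOf_dvd_natCard hy)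
  simpa [hy1] using he

theorem card_mul_card_mul_index_sup_dvd {E K : Subgroup G}
    (hEK : (Nat.card E).Coprime (Nat.card K)) :
    Nat.card E * Nat.card K * (K ⊔ E).index ∣ Nat.card G := by
  rw [← card_mul_index (K ⊔ E)]
  exact mul_dvd_mul_right
    (hEK.mul_dvd_of_dvd_of_dvd (card_dvd_of_le le_sup_right) (card_dvd_of_le le_sup_left)) _

theorem sq_mem_of_conj_eq_inv {E : Subgroup G} {g t : G} (hg : g ∈ normalizer E) (ht : t ∈ E)
    (hinv : t * g * t⁻¹ = g⁻¹) : g ^ 2 ∈ E := by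
  have hcomm : g * t * g⁻¹ * t⁻¹ = g ^ 2 := by
    rw [show g * t * g⁻¹ * t⁻¹ = g * (t * g * t⁻¹)⁻¹ by group, hinv, inv_inv, sq]
  rw [← hcomm]
  exact mul_mem ((mem_normalizer_iff.mp hg t).mp ht) (inv_mem ht)

theorem eq_one_of_conj_mem {E : Subgroup G} {g t s : G} (hp : (orderOf g).Prime)
    (hg : g ∈ normalizer E) (hfpf : ∀ y ∈ E, g * y * g⁻¹ = y → y = 1)
    (hcard : Nat.card E = orderOf g + 1) (htg : t * g * t⁻¹ ∈ normalizer E)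
    (hgen : closure ((E : Set G) ∪ {g, t}) = ⊤) (hodd : Odd E.index) (ht2 : t * t = 1)
    (htE : t ∉ E) (hs : s ∈ E) (hts : t * s * t⁻¹ ∈ E) : s = 1 := by
  by_contra hs1
  have htN := mem_normalizer_of_conj_mem hp hg hfpf hcard htg hs hs1 hts
  have : E.Normal := by
    rw [← normalizer_eq_top_iff, eq_top_iff, ← hgen, closure_le]
    exact Set.union_subset le_normalizer (Set.insert_subset hg (Set.singleton_subset_iff.mpr htN))
  exact htE (mem_of_mul_self_mem_of_odd_index hodd (ht2 ▸ one_mem E))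

theorem exists_conj_mul_mem_of_index_le {E H : Subgroup G} [Finite E] {t : G} (hEH : E ≤ H)
    (hEelem : ∀ x ∈ E, x * x = 1) (ht2 : t * t = 1) (htH : t ∉ H)
    (hinvol : ∀ x ∈ H, x * x = 1 → x ∈ E) (hTI : ∀ s ∈ E, t * s * t⁻¹ ∈ E → s = 1)
    (hodd : Odd H.index) (hle : H.index ≤ Nat.card E + 1) :
    ∃ u ∈ E, (u * t)⁻¹ * t * (u * t) ∈ E := by
  have hconj_invol : ∀ a x : G, x * x = 1 → a⁻¹ * x * a * (a⁻¹ * x * a) = 1 := by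
    intro a x hx
    rw [show a⁻¹ * x * a * (a⁻¹ * x * a) = a⁻¹ * (x * x) * a by group, hx]
    group
  have hmulH : ∀ u ∈ E, u * t ∉ H := fun u hu h =>
    htH (by simpa using mul_mem (inv_mem (hEH hu)) h)
  let f : Option E → G ⧸ H := fun o => o.elim ((1 : G) : G ⧸ H) fun u => ((u * t : G) : G ⧸ H)
  have hinj : Function.Injective f := by
    rintro (_ | u) (_ | v) h
    · rfl
    · exact absurd (QuotientGroup.eq.mp h) (by simpa using hmulH v v.2)
    · exact absurd (QuotientGroup.eq.mp h.symm) (by simpa using hmulH u u.2)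
    · have hw : ((u : G) * t)⁻¹ * (v * t) = t⁻¹ * ((u : G)⁻¹ * v) * t := by group
      have hwE : (u : G)⁻¹ * v ∈ E := mul_mem (inv_mem u.2) v.2
      have huv := QuotientGroup.eq.mp h
      rw [hw] at huv
      have hconjE := hinvol _ huv (hconj_invol t _ (hEelem _ hwE))
      rw [inv_eq_of_mul_eq_one_left ht2] at hconjE
      have h1 := hTI _ hwE (by rwa [inv_eq_of_mul_eq_one_left ht2])
      exact congrArg some (Subtype.ext (inv_mul_eq_one.mp h1))
  have : Finite (G ⧸ H) := Nat.finite_of_card_ne_zero hodd.pos.ne'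
  have hsurj := (hinj.bijective_of_nat_card_le (by rwa [Finite.card_option])).2
  have ht : IsPGroup 2 (zpowers t) := IsPGroup.of_card (n := 1) <| by
    rw [Nat.card_zpowers, pow_one]
    exact orderOf_eq_prime (sq t ▸ ht2) fun h => htH (h ▸ one_mem H)
  obtain ⟨ω, hω⟩ := ht.nonempty_fixed_point_of_prime_not_dvd_card (G ⧸ H)
    (Nat.not_even_iff_odd.mpr hodd ∘ even_iff_two_dvd.mpr)
  obtain ⟨o, rfl⟩ := hsurj ω
  have htω : t • f o = f o := hω ⟨t, mem_zpowers t⟩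
  rcases o with _ | u
  · exact (htH (by simpa [f, QuotientGroup.eq] using htω)).elim
  · refine ⟨u, u.2, hinvol _ ?_ (hconj_invol _ t ht2)⟩
    simp only [f, Option.elim, MulAction.Quotient.smul_coe, smul_eq_mul] at htω
    simpa [mul_assoc] using QuotientGroup.eq.mp htω.symm

theorem orderOf_mul_eq_three {E : Subgroup G} {u t : G} (hEelem : ∀ x ∈ E, x * x = 1)
    (ht2 : t * t = 1) (htE : t ∉ E) (hTI : ∀ s ∈ E, t * s * t⁻¹ ∈ E → s = 1) (hu : u ∈ E)
    (hfix : (u * t)⁻¹ * t * (u * t) ∈ E) : orderOf (u * t) = 3 := by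
  have hui : u⁻¹ = u := inv_eq_of_mul_eq_one_left (hEelem u hu)
  have hti : t⁻¹ = t := inv_eq_of_mul_eq_one_left ht2
  have hcubeE : (u * t) ^ 3 ∈ E := by
    rw [show (u * t) ^ 3 = u * ((u * t)⁻¹ * t * (u * t)) by
      rw [pow_three, mul_inv_rev, hui, hti]; group]
    exact mul_mem hu hfix
  have hcomm : (u * t) ^ 3 * u = u * (u * t) ^ 3 := by
    have h := hEelem _ (mul_mem hu hcubeE)
    rw [← inv_eq_of_mul_eq_one_left h, mul_inv_rev, hui,
      inv_eq_of_mul_eq_one_left (hEelem _ hcubeE)]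
  have hfixed : t * (u * t) ^ 3 * t⁻¹ = (u * t) ^ 3 := by
    rw [show t * (u * t) ^ 3 * t⁻¹ = u⁻¹ * ((u * t) ^ 3 * u) by
      simp only [pow_three]; group, hcomm, inv_mul_cancel_left]
  have hne : u * t ≠ 1 := fun h => htE (by rw [eq_inv_of_mul_eq_one_right h, hui]; exact hu)
  have : Fact (Nat.Prime 3) := ⟨Nat.prime_three⟩
  exact orderOf_eq_prime (hTI _ hcubeE (by rwa [hfixed])) hne

end

theorem psl28_amalgam_condition_general
    (G : Type*) [Group G] (E : Subgroup G) (g t : G)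
    (hEcard : Nat.card E = 8)
    (hEelem : ∀ x ∈ E, x * x = 1)
    (hg : orderOf g = 7)
    (hnorm : ∀ x ∈ E, g * x * g⁻¹ ∈ E)
    (hfpf : ∀ x ∈ E, g * x * g⁻¹ = x → x = 1)
    (ht2 : t * t = 1)
    (hinv : t * g * t⁻¹ = g⁻¹)
    (hgen : Subgroup.closure ((E : Set G) ∪ {g, t}) = ⊤)
    (hiso : Nonempty (G ≃* Matrix.ProjectiveSpecialLinearGroup (Fin 2) (GaloisField 2 3))) :
    ∃ m ∈ E, m ≠ 1 ∧ m * m = 1 ∧ orderOf (m * t) = 3 := by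
  have : Finite E := Nat.finite_of_card_ne_zero (by omega)
  have hG : Nat.card G = 504 :=
    (Nat.card_congr hiso.some.toEquiv).trans card_PSL_two_galoisField_two_three
  have hgN : g ∈ normalizer E := mem_normalizer_fintype hnorm
  have hcop : (Nat.card E).Coprime (Nat.card (zpowers g)) := by
    rw [hEcard, Nat.card_zpowers, hg]; norm_num
  have hdisj : Disjoint E (zpowers g) := disjoint_of_coprime_natCard hcop
  have htE : t ∉ E := fun ht => by
    have h2 := disjoint_def.mp hdisj (sq_mem_of_conj_eq_inv hgN ht hinv) (pow_mem (mem_zpowers g) 2)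
    exact absurd (hg ▸ orderOf_dvd_of_pow_eq_one h2) (by norm_num)
  have hEindex : E.index = 63 := by have := card_mul_index E; rw [hEcard, hG] at this; omega
  have hTI : ∀ s ∈ E, t * s * t⁻¹ ∈ E → s = 1 := fun s =>
    eq_one_of_conj_mem (hg ▸ Nat.prime_seven) hgN hfpf (by rw [hEcard, hg])
      (hinv ▸ inv_mem hgN) hgen (hEindex ▸ by decide) ht2 htE
  set H := zpowers g ⊔ E
  have hinvol : ∀ x ∈ H, x * x = 1 → x ∈ E := fun x =>
    mem_of_mul_self_eq_one_of_mem_sup (zpowers_le.mpr hgN) hdisj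
      (by rw [Nat.card_zpowers, hg]; decide)
  have hHindex : H.index ∣ 9 := by
    have h := card_mul_card_mul_index_sup_dvd hcop
    rw [hEcard, Nat.card_zpowers, hg, hG] at h
    exact Nat.dvd_of_mul_dvd_mul_left (by norm_num : 0 < 56) h
  obtain ⟨u, hu, hfix⟩ := exists_conj_mul_mem_of_index_le le_sup_right hEelem ht2
    (fun h => htE (hinvol t h ht2)) hinvol hTI (Odd.of_dvd_nat (by decide) hHindex)
    (hEcard ▸ Nat.le_of_dvd (by norm_num) hHindex)
  have h3 := orderOf_mul_eq_three hEelem ht2 htE hTI hu hfix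
  refine ⟨u, hu, fun hu1 => ?_, hEelem u hu, h3⟩
  rw [hu1, one_mul] at h3
  exact absurd (h3 ▸ orderOf_dvd_of_pow_eq_one (sq t ▸ ht2)) (by norm_num)

theorem psl28_amalgam_condition
    (G : Type*) [Group G] (E : Subgroup G) (g t : G)
    (hEcard : Nat.card E = 8)
    (hEelem : ∀ x ∈ E, x * x = 1)
    (hg : orderOf g = 7)
    (hnorm : ∀ x ∈ E, g * x * g⁻¹ ∈ E)
    (hfpf : ∀ x ∈ E, g * x * g⁻¹ = x → x = 1)
    (ht2 : t * t = 1) (ht1 : t ≠ 1)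
    (hinv : t * g * t⁻¹ = g⁻¹)
    (hgen : Subgroup.closure ((E : Set G) ∪ {g, t}) = ⊤)
    (hiso : Nonempty (G ≃* Matrix.ProjectiveSpecialLinearGroup (Fin 2) (GaloisField 2 3))) :
    ∃ m ∈ E, m ≠ 1 ∧ m * m = 1 ∧ orderOf (m * t) = 3 :=
  psl28_amalgam_condition_general G E g t hEcard hEelem hg hnorm hfpf ht2 hinv hgen hiso
end
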